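/- For any positive integer n and any partition λ of n, the sum over all cells u of the Young diagram of λ of the square of the hook length of u equals n² plus the sum over all cells u of the square of the content of u; that is, Σ_{u∈λ} h(u)² = n² + Σ_{u∈λ} c(u)². -/

import Mathlib

open Finset

/-- A Young diagram: a finite set of cells `(i, j)` with 1-based coordinates,
closed under decreasing either coordinate (down to 1).  Its rows are the
intervals `[1, λ_i]` for a weakly decreasing sequence `λ`. -/
def IsYoung (Y : Finset (ℕ × ℕ)) : Prop :=
  (∀ p ∈ Y, 1 ≤ p.1 ∧ 1 ≤ p.2) ∧
    ∀ p ∈ Y, ∀ q : ℕ × ℕ, 1 ≤ q.1 → 1 ≤ q.2 → q.1 ≤ p.1 → q.2 ≤ p.2 → q ∈ Y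

/-- `row Y i = λ_i`, the length of the `i`-th row. -/
def row (Y : Finset (ℕ × ℕ)) (i : ℕ) : ℕ := (Y.filter fun p => p.1 = i).card

/-- `col Y j = λ'_j`, the length of the `j`-th column (conjugate partition). -/
def col (Y : Finset (ℕ × ℕ)) (j : ℕ) : ℕ := (Y.filter fun p => p.2 = j).card

/-- Hook length `h(u) = λ_i + λ'_j - i - j + 1` of the cell `u = (i, j)`. -/
def hk (Y : Finset (ℕ × ℕ)) (u : ℕ × ℕ) : ℤ :=
  (row Y u.1 : ℤ) + (col Y u.2 : ℤ) - u.1 - u.2 + 1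

/-- Content `c(u) = j - i` of the cell `u = (i, j)`. -/
def ct (u : ℕ × ℕ) : ℤ := (u.2 : ℤ) - (u.1 : ℤ)

/-! Write the hook length of `u = (i, j)` as `h = a + l + 1`, with arm `a = λ_i - j` and leg
`l = λ'_j - i`. Reflecting each row, `(i, j) ↦ (i, λ_i + 1 - j)`, shows that `a + 1` and `j` are
equidistributed over the diagram, and reflecting each column does the same for `l + 1` and `i`.
Since `h² = (a + 1)² + (l + 1)² + 2al - 1` and `c² = j² + i² - 2ij`, this leaves
`Σ h² - Σ c² = 2 Σ (ij + al) - n`, so it suffices to show `n² + n = 2 Σ (ij + al)`.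
For that, count ordered pairs `(p, q)` of cells: either they are comparable in the product order,
and exactly `ij` cells lie weakly north-west of `p = (i, j)`, or one lies strictly north-east of
the other, and such pairs `(p, q)` correspond to the pairs (leg cell, arm cell) of the corner
`u = (q.1, p.2)`. -/

theorem eq_Icc_one_card_of_down_closed {S : Finset ℕ} (hpos : ∀ a ∈ S, 1 ≤ a)
    (hdown : ∀ a ∈ S, ∀ b, 1 ≤ b → b ≤ a → b ∈ S) : S = Icc 1 #S := by
  refine eq_of_subset_of_card_le (fun a ha => mem_Icc.2 ⟨hpos a ha, ?_⟩) (by simp)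
  have hsub : Icc 1 a ⊆ S := fun b hb => hdown a ha b (mem_Icc.1 hb).1 (mem_Icc.1 hb).2
  simpa using card_le_card hsub

theorem sum_card_filter_comm {α : Type*} (s : Finset α) (r : α → α → Prop)
    [DecidableRel r] :
    ∑ p ∈ s, #{q ∈ s | r p q} = ∑ p ∈ s, #{q ∈ s | r q p} :=
  sum_card_bipartiteAbove_eq_sum_card_bipartiteBelow r

theorem card_add_one_eq_card_quadrants {s : Finset (ℕ × ℕ)} {p : ℕ × ℕ} (hp : p ∈ s) :
    #s + 1 = #{q ∈ s | q ≤ p} + #{q ∈ s | p ≤ q}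
      + #{q ∈ s | q.1 < p.1 ∧ p.2 < q.2} + #{q ∈ s | p.1 < q.1 ∧ q.2 < p.2} := by
  have hdiag : #{q ∈ s | q = p} = 1 := by rw [filter_eq', if_pos hp, card_singleton]
  rw [← hdiag]
  simp only [card_eq_sum_ones s, card_filter, ← sum_add_distrib]
  refine sum_congr rfl fun q _ => ?_
  simp only [Prod.le_def, Prod.ext_iff]
  split_ifs <;> omega

def arm (Y : Finset (ℕ × ℕ)) (u : ℕ × ℕ) : ℕ := row Y u.1 - u.2

def leg (Y : Finset (ℕ × ℕ)) (u : ℕ × ℕ) : ℕ := col Y u.2 - u.1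

def transpose (Y : Finset (ℕ × ℕ)) : Finset (ℕ × ℕ) :=
  Y.map (Equiv.prodComm ℕ ℕ).toEmbedding

section transpose

variable {Y : Finset (ℕ × ℕ)}

@[simp]
theorem mem_transpose {u : ℕ × ℕ} : u ∈ transpose Y ↔ u.swap ∈ Y := by
  simp [transpose]

theorem card_filter_transpose (P : ℕ × ℕ → Prop) [DecidablePred P] :
    #{u ∈ transpose Y | P u} = #{u ∈ Y | P u.swap} := by
  rw [transpose, filter_map, card_map]
  rfl

@[simp]
theorem row_transpose (j : ℕ) : row (transpose Y) j = col Y j :=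
  card_filter_transpose _

theorem leg_eq_arm_transpose (u : ℕ × ℕ) : leg Y u = arm (transpose Y) u.swap := by
  simp [arm, leg]

theorem sum_transpose {M : Type*} [AddCommMonoid M] (f : ℕ × ℕ → M) :
    ∑ u ∈ transpose Y, f u = ∑ u ∈ Y, f u.swap :=
  sum_map _ _ _

theorem IsYoung.transpose (hY : IsYoung Y) : IsYoung (transpose Y) := by
  refine ⟨fun p hp => (hY.1 _ (mem_transpose.1 hp)).symm, fun p hp q h1 h2 h1' h2' => ?_⟩
  exact mem_transpose.2 (hY.2 _ (mem_transpose.1 hp) q.swap h2 h1 h2' h1')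

end transpose

namespace IsYoung

variable {Y : Finset (ℕ × ℕ)}

theorem mem_iff_le_row (hY : IsYoung Y) (i j : ℕ) :
    (i, j) ∈ Y ↔ 1 ≤ j ∧ j ≤ row Y i := by
  set S := (Y.filter (·.1 = i)).image Prod.snd
  have hS (k : ℕ) : k ∈ S ↔ (i, k) ∈ Y := by simp [S]
  have hcard : #S = row Y i := card_image_of_injOn fun p hp q hq h =>
    Prod.ext ((mem_filter.1 hp).2.trans (mem_filter.1 hq).2.symm) h
  have hint : S = Icc 1 #S := eq_Icc_one_card_of_down_closed
    (fun a ha => (hY.1 _ ((hS a).1 ha)).2)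
    (fun a ha b hb hba => (hS b).2 <|
      hY.2 _ ((hS a).1 ha) (i, b) (hY.1 _ ((hS a).1 ha)).1 hb le_rfl hba)
  rw [← hS, hint, hcard, mem_Icc]

theorem mem_iff_le_col (hY : IsYoung Y) (i j : ℕ) :
    (i, j) ∈ Y ↔ 1 ≤ i ∧ i ≤ col Y j := by
  rw [← row_transpose, ← hY.transpose.mem_iff_le_row, mem_transpose, Prod.swap_prod_mk]

theorem hk_eq_arm_add_leg_add_one (hY : IsYoung Y) {u : ℕ × ℕ} (hu : u ∈ Y) :
    hk Y u = arm Y u + leg Y u + 1 := by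
  have hrow := (hY.mem_iff_le_row u.1 u.2).1 hu
  have hcol := (hY.mem_iff_le_col u.1 u.2).1 hu
  simp only [hk, arm, leg]
  omega

theorem sum_arm_add_one (hY : IsYoung Y) {M : Type*} [AddCommMonoid M] (f : ℕ → M) :
    ∑ u ∈ Y, f (arm Y u + 1) = ∑ u ∈ Y, f u.2 := by
  have hmem (u : ℕ × ℕ) (hu : u ∈ Y) : 1 ≤ u.2 ∧ u.2 ≤ row Y u.1 :=
    (hY.mem_iff_le_row u.1 u.2).1 hu
  let reflect : ℕ × ℕ → ℕ × ℕ := fun u => (u.1, row Y u.1 + 1 - u.2)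
  have hmaps (u : ℕ × ℕ) (hu : u ∈ Y) : reflect u ∈ Y :=
    (hY.mem_iff_le_row _ _).2 (by have := hmem u hu; omega)
  have hinv (u : ℕ × ℕ) (hu : u ∈ Y) : reflect (reflect u) = u :=
    Prod.ext rfl (by have := hmem u hu; simp [reflect]; omega)
  refine sum_nbij' reflect reflect hmaps hmaps hinv hinv fun u hu => ?_
  have := hmem u hu
  simp only [arm, reflect]
  congr 1
  omega

theorem sum_leg_add_one (hY : IsYoung Y) {M : Type*} [AddCommMonoid M] (f : ℕ → M) :
    ∑ u ∈ Y, f (leg Y u + 1) = ∑ u ∈ Y, f u.1 := by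
  simpa only [sum_transpose, ← leg_eq_arm_transpose, Prod.snd_swap] using
    hY.transpose.sum_arm_add_one f

theorem card_filter_arm (hY : IsYoung Y) (u : ℕ × ℕ) :
    #{q ∈ Y | q.1 = u.1 ∧ u.2 < q.2} = arm Y u := by
  have : {q ∈ Y | q.1 = u.1 ∧ u.2 < q.2} = {u.1} ×ˢ Ioc u.2 (row Y u.1) := by
    ext ⟨a, b⟩
    simp only [mem_filter, mem_product, mem_singleton, mem_Ioc]
    constructor
    · rintro ⟨h, rfl, hb⟩
      exact ⟨rfl, hb, ((hY.mem_iff_le_row _ _).1 h).2⟩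
    · rintro ⟨rfl, hb⟩
      exact ⟨(hY.mem_iff_le_row _ _).2 ⟨by omega, hb.2⟩, rfl, hb.1⟩
  rw [this, card_product, card_singleton, one_mul, Nat.card_Ioc, arm]

theorem card_filter_leg (hY : IsYoung Y) (u : ℕ × ℕ) :
    #{q ∈ Y | q.2 = u.2 ∧ u.1 < q.1} = leg Y u := by
  rw [leg_eq_arm_transpose, ← hY.transpose.card_filter_arm, card_filter_transpose]
  rfl

theorem card_filter_le (hY : IsYoung Y) {p : ℕ × ℕ} (hp : p ∈ Y) :
    #{q ∈ Y | q ≤ p} = p.1 * p.2 := by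
  have : {q ∈ Y | q ≤ p} = Icc 1 p.1 ×ˢ Icc 1 p.2 := by
    ext q
    simp only [mem_filter, mem_product, mem_Icc, Prod.le_def]
    constructor
    · rintro ⟨hq, h1, h2⟩
      exact ⟨⟨(hY.1 q hq).1, h1⟩, (hY.1 q hq).2, h2⟩
    · rintro ⟨⟨h1, h1'⟩, h2, h2'⟩
      exact ⟨hY.2 p hp q h1 h2 h1' h2', h1', h2'⟩
  rw [this, card_product, Nat.card_Icc, Nat.card_Icc, Nat.add_sub_cancel, Nat.add_sub_cancel]

theorem sum_card_filter_northeast (hY : IsYoung Y) :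
    ∑ p ∈ Y, #{q ∈ Y | q.1 < p.1 ∧ p.2 < q.2} = ∑ u ∈ Y, leg Y u * arm Y u := by
  have hpairs : ∑ p ∈ Y, #{q ∈ Y | q.1 < p.1 ∧ p.2 < q.2}
      = #{x ∈ Y ×ˢ Y | x.2.1 < x.1.1 ∧ x.1.2 < x.2.2} := by
    simp only [card_filter, sum_product]
  have hcorner : Set.MapsTo (fun x : (ℕ × ℕ) × (ℕ × ℕ) => (x.2.1, x.1.2))
      (({x ∈ Y ×ˢ Y | x.2.1 < x.1.1 ∧ x.1.2 < x.2.2} : Finset _) : Set _) Y := by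
    rintro ⟨p, q⟩ hx
    simp only [coe_filter, mem_product, Set.mem_ofPred_eq] at hx
    exact hY.2 p hx.1.1 _ (hY.1 q hx.1.2).1 (hY.1 p hx.1.1).2 hx.2.1.le le_rfl
  rw [hpairs, card_eq_sum_card_fiberwise hcorner]
  refine sum_congr rfl fun u _ => ?_
  rw [← hY.card_filter_leg, ← hY.card_filter_arm, ← card_product]
  congr 1
  ext ⟨⟨a, b⟩, c, d⟩
  simp only [mem_filter, mem_product, Prod.ext_iff]
  grind

theorem card_mul_card_add_card (hY : IsYoung Y) :
    #Y * #Y + #Y = 2 * ∑ u ∈ Y, u.1 * u.2 + 2 * ∑ u ∈ Y, leg Y u * arm Y u := by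
  calc #Y * #Y + #Y = ∑ p ∈ Y, (#Y + 1) := by rw [sum_const, smul_eq_mul]; ring
    _ = ∑ p ∈ Y, (#{q ∈ Y | q ≤ p} + #{q ∈ Y | p ≤ q}
          + #{q ∈ Y | q.1 < p.1 ∧ p.2 < q.2} + #{q ∈ Y | p.1 < q.1 ∧ q.2 < p.2}) :=
      sum_congr rfl fun p hp => card_add_one_eq_card_quadrants hp
    _ = _ := by
      simp only [sum_add_distrib]
      rw [sum_card_filter_comm Y (· ≤ ·),
        sum_card_filter_comm Y fun p q => p.1 < q.1 ∧ q.2 < p.2,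
        sum_congr rfl fun p hp => hY.card_filter_le hp, hY.sum_card_filter_northeast]
      ring

end IsYoung

theorem sum_hook_sq_eq_general (n : ℕ) (Y : Finset (ℕ × ℕ))
    (hY : IsYoung Y) (hcard : Y.card = n) :
    ∑ u ∈ Y, (hk Y u) ^ 2 = (n : ℤ) ^ 2 + ∑ u ∈ Y, (ct u) ^ 2 := by
  subst hcard
  have hhook (u : ℕ × ℕ) (hu : u ∈ Y) : hk Y u ^ 2 = ((arm Y u + 1 : ℕ) : ℤ) ^ 2
      + ((leg Y u + 1 : ℕ) : ℤ) ^ 2 + 2 * ((leg Y u * arm Y u : ℕ) : ℤ) - 1 := by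
    rw [hY.hk_eq_arm_add_leg_add_one hu]
    push_cast
    ring
  have hct (u : ℕ × ℕ) : ct u ^ 2 = ((u.2 : ℕ) : ℤ) ^ 2 + ((u.1 : ℕ) : ℤ) ^ 2
      - 2 * ((u.1 * u.2 : ℕ) : ℤ) := by
    simp only [ct]
    push_cast
    ring
  have hpairs := congrArg (Nat.cast : ℕ → ℤ) hY.card_mul_card_add_card
  rw [sum_congr rfl hhook, sum_congr rfl fun u _ => hct u]
  simp only [sum_add_distrib, sum_sub_distrib, ← mul_sum, sum_const, nsmul_eq_mul, mul_one,
    hY.sum_arm_add_one fun k => (k : ℤ) ^ 2, hY.sum_leg_add_one fun k => (k : ℤ) ^ 2]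
  push_cast at hpairs ⊢
  linarith

theorem sum_hook_sq_eq (n : ℕ) (hn : 0 < n) (Y : Finset (ℕ × ℕ))
    (hY : IsYoung Y) (hcard : Y.card = n) :
    ∑ u ∈ Y, (hk Y u) ^ 2 = (n : ℤ) ^ 2 + ∑ u ∈ Y, (ct u) ^ 2 :=
  sum_hook_sq_eq_general n Y hY hcard
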